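/- For n ≥ 1 and g_n(t) = ∑_{k=1}^n (1 − k/n)(1/k) sin(kt), the derivative satisfies g_n'(t) = (1/2)F_n(t) − 1/2, where F_n(t) = ∑_{|k|≤n−1} (1 − |k|/n) e^{ikt} is the Fejér kernel. Consequently ∫_0^{2π} |g_n'(t)| dt ≤ 2π, i.e. the total variation of g_n on [0, 2π] is at most 2π. -/

import Mathlib

open Real Complex

/-- `g_n(t) = ∑_{k=1}^n (1 - k/n)(1/k) sin(kt)` (real valued). -/
noncomputable def gFun (n : ℕ) (t : ℝ) : ℝ :=
  ∑ k ∈ Finset.Icc 1 n, (1 - (k : ℝ) / n) * (1 / k) * Real.sin (k * t)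

/-- The Fejér kernel `F_n(t) = ∑_{|k| ≤ n-1} (1 - |k|/n) e^{ikt}` (real valued). -/
noncomputable def fejer (n : ℕ) (t : ℝ) : ℝ :=
  ∑ k ∈ Finset.Icc (-(n : ℤ) + 1) ((n : ℤ) - 1), (1 - |(k : ℝ)| / n) * Real.cos (k * t)

/-! Termwise differentiation gives `g_n' t = ∑_{k=1}^n (1 - k/n) cos (k t)`, and folding the
symmetric Fejér sum onto `k ≥ 1` identifies this with `(F_n t - 1) / 2`. Nonnegativity comes from
`n F_n t = |∑_{j<n} e^{ijt}|²`, proved by induction on `n`: the new term `e^{int}` adds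
`1 + 2 ∑_{k=1}^n cos (k t)` to the square. Hence `|g_n'| ≤ (F_n + 1) / 2`, whose integral over a
period is `2π` since every `cos (k t)` with `k ≥ 1` integrates to zero. -/

open Finset

theorem Finset.sum_Icc_neg_natCast {M : Type*} [AddCommMonoid M] (g : ℤ → M) (m : ℕ) :
    ∑ k ∈ Icc (-(m : ℤ)) m, g k = g 0 + ∑ k ∈ Icc 1 m, (g k + g (-k)) := by
  induction m with
  | zero => simp
  | succ m ih =>
    have hIcc : Icc (-((m + 1 : ℕ) : ℤ)) (m + 1 : ℕ) =
        insert ((m + 1 : ℕ) : ℤ) (insert (-((m + 1 : ℕ) : ℤ)) (Icc (-(m : ℤ)) m)) := by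
      ext x; simp only [mem_insert, mem_Icc]; omega
    rw [hIcc, sum_insert (by simp only [mem_insert, mem_Icc]; omega), sum_insert (by simp), ih,
      sum_Icc_succ_top (by omega)]
    abel

theorem sum_cos_mul_cos_add_sin_mul_sin (n : ℕ) (t : ℝ) :
    (∑ j ∈ range n, Real.cos (j * t)) * Real.cos (n * t) +
      (∑ j ∈ range n, Real.sin (j * t)) * Real.sin (n * t) = ∑ k ∈ Icc 1 n, Real.cos (k * t) := by
  rw [sum_mul, sum_mul, ← sum_add_distrib]
  refine sum_nbij' (fun j => n - j) (fun k => n - k) ?_ ?_ ?_ ?_ fun j hj => ?_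
  any_goals intro i hi; simp only [mem_range, mem_Icc] at hi ⊢; omega
  rw [mul_comm (Real.cos _), mul_comm (Real.sin _), ← Real.cos_sub, ← sub_mul,
    Nat.cast_sub (mem_range.mp hj).le]

theorem sq_sum_cos_add_sq_sum_sin (n : ℕ) (t : ℝ) :
    (∑ j ∈ range n, Real.cos (j * t)) ^ 2 + (∑ j ∈ range n, Real.sin (j * t)) ^ 2 =
      n + 2 * ∑ k ∈ Icc 1 n, (n - k : ℝ) * Real.cos (k * t) := by
  induction n with
  | zero => simp
  | succ n ih =>
    have hweights : ∑ k ∈ Icc 1 n, ((n + 1 : ℕ) - k : ℝ) * Real.cos (k * t) =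
        ∑ k ∈ Icc 1 n, (n - k : ℝ) * Real.cos (k * t) + ∑ k ∈ Icc 1 n, Real.cos (k * t) := by
      rw [← sum_add_distrib]
      refine sum_congr rfl fun k _ => ?_
      push_cast
      ring
    rw [sum_range_succ, sum_range_succ, sum_Icc_succ_top (by omega), hweights, sub_self, zero_mul,
      add_zero, ← sum_cos_mul_cos_add_sin_mul_sin]
    push_cast
    linear_combination ih + Real.sin_sq_add_cos_sq ((n : ℝ) * t)

theorem integral_cos_natCast_mul {k : ℕ} (hk : k ≠ 0) :
    ∫ t in (0 : ℝ)..2 * π, Real.cos (k * t) = 0 := by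
  have hsin : Real.sin (k * (2 * π)) = 0 := by
    rw [← mul_assoc, ← Nat.cast_ofNat, ← Nat.cast_mul, Real.sin_nat_mul_pi]
  rw [intervalIntegral.integral_comp_mul_left Real.cos (Nat.cast_ne_zero.mpr hk), integral_cos,
    hsin, mul_zero, Real.sin_zero, sub_zero, smul_zero]

theorem hasDerivAt_gFun (n : ℕ) (t : ℝ) :
    HasDerivAt (gFun n) (∑ k ∈ Icc 1 n, (1 - k / n : ℝ) * Real.cos (k * t)) t := by
  refine HasDerivAt.fun_sum fun k hk => ?_
  have hk0 : (k : ℝ) ≠ 0 := Nat.cast_ne_zero.mpr (Nat.one_le_iff_ne_zero.mp (mem_Icc.mp hk).1)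
  exact ((((hasDerivAt_id t).const_mul (k : ℝ)).sin).const_mul _).congr_deriv
    (by simp only [id, mul_one]; field_simp)

section Fejer

variable {n : ℕ}

theorem fejer_eq_one_add_two_mul_sum (hn : n ≠ 0) (t : ℝ) :
    fejer n t = 1 + 2 * ∑ k ∈ Icc 1 n, (1 - k / n : ℝ) * Real.cos (k * t) := by
  -- the weights vanish at `k = ± n`, so the sum may run over `[-n, n]`
  have hext : fejer n t = ∑ k ∈ Icc (-(n : ℤ)) n, (1 - |(k : ℝ)| / n) * Real.cos (k * t) := by
    refine sum_subset (fun k hk => by simp only [mem_Icc] at hk ⊢; omega) fun k hk hk' => ?_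
    have hkn : |(k : ℝ)| = n := by
      simp only [mem_Icc] at hk hk'
      rcases (by omega : k = -n ∨ k = n) with rfl | rfl <;> simp
    rw [hkn, div_self (Nat.cast_ne_zero.mpr hn), sub_self, zero_mul]
  rw [hext, sum_Icc_neg_natCast, mul_sum]
  push_cast
  simp only [abs_neg, neg_mul, Real.cos_neg, Nat.abs_cast, abs_zero, zero_div, sub_zero, zero_mul,
    Real.cos_zero, mul_one, two_mul]

theorem fejer_eq_sq_div (hn : n ≠ 0) (t : ℝ) :
    fejer n t =
      ((∑ j ∈ range n, Real.cos (j * t)) ^ 2 + (∑ j ∈ range n, Real.sin (j * t)) ^ 2) / n := by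
  have hn' : (n : ℝ) ≠ 0 := Nat.cast_ne_zero.mpr hn
  rw [sq_sum_cos_add_sq_sum_sin, fejer_eq_one_add_two_mul_sum hn, eq_div_iff hn', add_mul, one_mul,
    mul_assoc, sum_mul]
  congr 2
  refine sum_congr rfl fun k _ => ?_
  field_simp

theorem fejer_nonneg (n : ℕ) (t : ℝ) : 0 ≤ fejer n t := by
  rcases eq_or_ne n 0 with rfl | hn
  · simp [fejer]
  · rw [fejer_eq_sq_div hn]
    positivity

@[fun_prop]
theorem continuous_fejer (n : ℕ) : Continuous (fejer n) := by
  unfold fejer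
  fun_prop

theorem integral_fejer (hn : n ≠ 0) : ∫ t in (0 : ℝ)..2 * π, fejer n t = 2 * π := by
  simp_rw [fejer_eq_one_add_two_mul_sum hn]
  rw [intervalIntegral.integral_add intervalIntegrable_const
    (Continuous.intervalIntegrable (by fun_prop) _ _), intervalIntegral.integral_const_mul,
    intervalIntegral.integral_finsetSum fun k _ => Continuous.intervalIntegrable (by fun_prop) _ _,
    sum_eq_zero fun k hk => by
    rw [intervalIntegral.integral_const_mul,
      integral_cos_natCast_mul (Nat.one_le_iff_ne_zero.mp (mem_Icc.mp hk).1), mul_zero]]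
  simp

end Fejer

theorem gFun_deriv_and_variation (n : ℕ) (hn : 1 ≤ n) :
    (∀ t : ℝ, HasDerivAt (gFun n) (fejer n t / 2 - 1 / 2) t) ∧
    (∫ t in (0:ℝ)..(2 * Real.pi), |deriv (gFun n) t|) ≤ 2 * Real.pi := by
  have hn0 : n ≠ 0 := Nat.one_le_iff_ne_zero.mp hn
  have hderiv (t : ℝ) : HasDerivAt (gFun n) (fejer n t / 2 - 1 / 2) t := by
    convert hasDerivAt_gFun n t using 1
    rw [fejer_eq_one_add_two_mul_sum hn0]
    ring
  refine ⟨hderiv, ?_⟩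
  calc (∫ t in (0 : ℝ)..2 * π, |deriv (gFun n) t|)
      = ∫ t in (0 : ℝ)..2 * π, |fejer n t / 2 - 1 / 2| := by simp_rw [(hderiv _).deriv]
    _ ≤ ∫ t in (0 : ℝ)..2 * π, (fejer n t / 2 + 1 / 2) :=
      intervalIntegral.integral_mono_on (by positivity)
        (Continuous.intervalIntegrable (by fun_prop) _ _)
        (Continuous.intervalIntegrable (by fun_prop) _ _) fun t _ =>
        abs_sub_le_iff.mpr ⟨by linarith [fejer_nonneg n t], by linarith [fejer_nonneg n t]⟩
    _ = 2 * π := by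
      rw [intervalIntegral.integral_add (Continuous.intervalIntegrable (by fun_prop) _ _)
        intervalIntegrable_const, intervalIntegral.integral_div, integral_fejer hn0,
        intervalIntegral.integral_const, sub_zero, smul_eq_mul]
      ring
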